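/- Define x_± = ((a00^00 + a11^11) ± √((a00^00 − a11^11)² + 4 a01^01 a10^10))/2 and Λ_± = (a01^01 − a00^00 + x_±)(a00^00 + a01^01 − x_∓). If a01^01 ≠ 0 and x_+ ≠ x_−, then tr(Q_N^{(g)}) = (x_+^{N-1} Λ_+ − x_−^{N-1} Λ_−)/(a01^01 (x_+ − x_−)). -/

import Mathlib

open Matrix Kronecker

/-- Configuration space of `N` sites, each holding a state in `{0,1}`. -/
abbrev Conf (N : ℕ) := Fin N → Fin 2

/-- `Fin 2 × Conf N ≃ Conf (N+1)` by prepending the first bit. -/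
def confEquiv (N : ℕ) : Fin 2 × Conf N ≃ Conf (N + 1) :=
  Fin.consEquiv (fun _ => Fin 2)

/-- `(Fin 2 × Fin 2) × Conf N ≃ Conf (N+2)` by prepending the first two bits. -/
def confEquiv2 (N : ℕ) : (Fin 2 × Fin 2) × Conf N ≃ Conf (N + 2) :=
  (((Equiv.prodAssoc (Fin 2) (Fin 2) (Conf N)).trans
    ((Equiv.refl (Fin 2)).prodCongr (confEquiv N))).trans (confEquiv (N + 1)))

/-- The global operator `Q_N^{(g)}`, defined by `Q_1 = I_2` and
`Q_{N+1} = (I_2 ⊗ Q_N) (Q^{(l)} ⊗ I_{2^{N-1}})`. -/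
def Qg {R : Type*} [CommRing R] (Ql : Matrix (Fin 2 × Fin 2) (Fin 2 × Fin 2) R) :
    (N : ℕ) → Matrix (Conf N) (Conf N) R
  | 0 => 1
  | 1 => 1
  | (N + 2) =>
      (Matrix.reindex (confEquiv (N + 1)) (confEquiv (N + 1))
          ((1 : Matrix (Fin 2) (Fin 2) R) ⊗ₖ Qg Ql (N + 1))) *
      (Matrix.reindex (confEquiv2 N) (confEquiv2 N)
          (Ql ⊗ₖ (1 : Matrix (Conf N) (Conf N) R)))

/-- Top-left block `E`. -/
def blockTL {R : Type*} [CommRing R] {N : ℕ}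
    (M : Matrix (Conf (N + 1)) (Conf (N + 1)) R) : Matrix (Conf N) (Conf N) R :=
  Matrix.of fun x y => M (Fin.cons 0 x) (Fin.cons 0 y)

/-- Top-right block `F`. -/
def blockTR {R : Type*} [CommRing R] {N : ℕ}
    (M : Matrix (Conf (N + 1)) (Conf (N + 1)) R) : Matrix (Conf N) (Conf N) R :=
  Matrix.of fun x y => M (Fin.cons 0 x) (Fin.cons 1 y)

/-- Bottom-left block `G`. -/
def blockBL {R : Type*} [CommRing R] {N : ℕ}
    (M : Matrix (Conf (N + 1)) (Conf (N + 1)) R) : Matrix (Conf N) (Conf N) R :=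
  Matrix.of fun x y => M (Fin.cons 1 x) (Fin.cons 0 y)

/-- Bottom-right block `H`. -/
def blockBR {R : Type*} [CommRing R] {N : ℕ}
    (M : Matrix (Conf (N + 1)) (Conf (N + 1)) R) : Matrix (Conf N) (Conf N) R :=
  Matrix.of fun x y => M (Fin.cons 1 x) (Fin.cons 1 y)

/-!
Since `Ql (k, l) (i, j)` vanishes unless `j = l`, the diagonal of `Q_{N+2}` only sees the
weights `T j l = Ql (j, l) (j, l)`: the traces of the two diagonal blocks of `Q_{N+1}` (first
site fixed to `j`) form the vector `T ^ N *ᵥ 1`. Hence `tr Q_{N+1} = 1 ⬝ᵥ T ^ N *ᵥ 1` satisfies,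
by Cayley–Hamilton, `t (n + 2) = tr T * t (n + 1) - det T * t n`, whose characteristic roots are
`x_±`, and Binet's formula with `t 0 = 2`, `t 1 = ∑ T j l` gives the closed form.
-/

theorem confEquiv_apply (N : ℕ) (i : Fin 2) (x : Conf N) :
    confEquiv N (i, x) = Fin.cons i x := rfl

theorem confEquiv2_apply (N : ℕ) (i j : Fin 2) (x : Conf N) :
    confEquiv2 N ((i, j), x) = Fin.cons i (Fin.cons j x) := rfl

theorem confEquiv_symm_cons (N : ℕ) (i : Fin 2) (x : Conf N) :
    (confEquiv N).symm (Fin.cons i x) = (i, x) := by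
  rw [← confEquiv_apply, Equiv.symm_apply_apply]

theorem confEquiv2_symm_cons (N : ℕ) (i j : Fin 2) (x : Conf N) :
    (confEquiv2 N).symm (Fin.cons i (Fin.cons j x)) = ((i, j), x) := by
  rw [← confEquiv2_apply, Equiv.symm_apply_apply]

section Recurrence

variable {R : Type*} [CommRing R]

theorem sub_mul_eq_of_two_step_recurrence {p q : R} {u : ℕ → R}
    (hu : ∀ n, u (n + 2) = (p + q) * u (n + 1) - p * q * u n) (n : ℕ) :
    (p - q) * u n = (u 1 - q * u 0) * p ^ n - (u 1 - p * u 0) * q ^ n := by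
  induction n using Nat.twoStepInduction with
  | zero => ring
  | one => ring
  | more n ih₀ ih₁ =>
    rw [hu]
    linear_combination (p + q) * ih₁ - p * q * ih₀

theorem Matrix.pow_add_two_fin_two (A : Matrix (Fin 2) (Fin 2) R) (n : ℕ) :
    A ^ (n + 2) = A.trace • A ^ (n + 1) - A.det • A ^ n := by
  have cayleyHamilton : A ^ 2 = A.trace • A - A.det • 1 := by
    ext i j
    fin_cases i <;> fin_cases j <;>
      simp [sq, mul_apply, Fin.sum_univ_two, trace_fin_two, det_fin_two] <;> ring
  rw [pow_add, cayleyHamilton, mul_sub, mul_smul_comm, mul_smul_comm, mul_one, ← pow_succ]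

theorem Matrix.one_dotProduct_pow_mulVec_add_two (A : Matrix (Fin 2) (Fin 2) R)
    (v : Fin 2 → R) (n : ℕ) :
    1 ⬝ᵥ (A ^ (n + 2) *ᵥ v) =
      A.trace * (1 ⬝ᵥ (A ^ (n + 1) *ᵥ v)) - A.det * (1 ⬝ᵥ (A ^ n *ᵥ v)) := by
  rw [pow_add_two_fin_two, sub_mulVec, smul_mulVec, smul_mulVec, dotProduct_sub,
    dotProduct_smul, dotProduct_smul, smul_eq_mul, smul_eq_mul]

end Recurrence

section TransferMatrix

variable {R : Type*} [CommRing R] (Ql : Matrix (Fin 2 × Fin 2) (Fin 2 × Fin 2) R)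

def transferMatrix : Matrix (Fin 2) (Fin 2) R :=
  of fun j l => Ql (j, l) (j, l)

def diagBlockTrace {N : ℕ} (M : Matrix (Conf (N + 1)) (Conf (N + 1)) R) (j : Fin 2) : R :=
  ∑ x : Conf N, M (Fin.cons j x) (Fin.cons j x)

theorem trace_eq_one_dotProduct_diagBlockTrace {N : ℕ}
    (M : Matrix (Conf (N + 1)) (Conf (N + 1)) R) :
    M.trace = 1 ⬝ᵥ diagBlockTrace M := by
  rw [one_dotProduct, trace, ← Equiv.sum_comp (confEquiv N), Fintype.sum_prod_type]
  rfl

theorem Qg_add_two_cons_cons {N : ℕ} (i j k l : Fin 2) (x y : Conf N) :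
    Qg Ql (N + 2) (Fin.cons i (Fin.cons j x)) (Fin.cons k (Fin.cons l y)) =
      ∑ n : Fin 2, Qg Ql (N + 1) (Fin.cons j x) (Fin.cons n y) * Ql (i, n) (k, l) := by
  rw [Qg, mul_apply, ← Equiv.sum_comp (confEquiv2 N), Fintype.sum_prod_type,
    Fintype.sum_prod_type]
  simp only [confEquiv2_apply, reindex_apply, submatrix_apply, confEquiv_symm_cons,
    confEquiv2_symm_cons, kroneckerMap_apply, one_apply]
  simp [Fin.sum_univ_two]

variable {Ql}

theorem diagBlockTrace_Qg_add_two
    (hvan : ∀ i j k l : Fin 2, j ≠ l → Ql (k, l) (i, j) = 0) (N : ℕ) :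
    diagBlockTrace (Qg Ql (N + 2)) = transferMatrix Ql *ᵥ diagBlockTrace (Qg Ql (N + 1)) := by
  ext j
  rw [diagBlockTrace, ← Equiv.sum_comp (confEquiv N), Fintype.sum_prod_type, mulVec,
    dotProduct]
  refine Finset.sum_congr rfl fun l _ => ?_
  rw [diagBlockTrace, Finset.mul_sum]
  refine Finset.sum_congr rfl fun x _ => ?_
  rw [confEquiv_apply, Qg_add_two_cons_cons,
    Finset.sum_eq_single_of_mem l (Finset.mem_univ l)
      fun n _ hn => by rw [hvan j l j n hn.symm, mul_zero]]
  simp only [transferMatrix, of_apply, mul_comm]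

theorem diagBlockTrace_Qg (hvan : ∀ i j k l : Fin 2, j ≠ l → Ql (k, l) (i, j) = 0) (N : ℕ) :
    diagBlockTrace (Qg Ql (N + 1)) = transferMatrix Ql ^ N *ᵥ 1 := by
  induction N with
  | zero =>
    ext j
    simp [diagBlockTrace, Qg]
  | succ N ih =>
    rw [diagBlockTrace_Qg_add_two hvan, ih, mulVec_mulVec, pow_succ']

theorem trace_Qg (hvan : ∀ i j k l : Fin 2, j ≠ l → Ql (k, l) (i, j) = 0) (N : ℕ) :
    (Qg Ql (N + 1)).trace = 1 ⬝ᵥ (transferMatrix Ql ^ N *ᵥ 1) := by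
  rw [trace_eq_one_dotProduct_diagBlockTrace, diagBlockTrace_Qg hvan]

end TransferMatrix

/-- closed form of the trace. With a fixed complex square root `s` of
`(a₀₀⁰⁰ − a₁₁¹¹)² + 4 a₀₁⁰¹ a₁₀¹⁰`, `x_± = ((a₀₀⁰⁰+a₁₁¹¹) ± s)/2`,
`Λ_± = (a₀₁⁰¹ − a₀₀⁰⁰ + x_±)(a₀₀⁰⁰ + a₀₁⁰¹ − x_∓)`, if `a₀₁⁰¹ ≠ 0` and `xp ≠ xm`, then
`tr Q_N^{(g)} = (xp^{N-1} Lp − xm^{N-1} Lm)/(a₀₁⁰¹ (xp − xm))`. -/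
theorem stmt5 (Ql : Matrix (Fin 2 × Fin 2) (Fin 2 × Fin 2) ℂ) (hvan : ∀ i j k l : Fin 2, j ≠ l → Ql (k, l) (i, j) = 0) (s xp xm Lp Lm : ℂ)
    (hs : s ^ 2 = (Ql (0, 0) (0, 0) - Ql (1, 1) (1, 1)) ^ 2
        + 4 * Ql (0, 1) (0, 1) * Ql (1, 0) (1, 0))
    (hxp : xp = ((Ql (0, 0) (0, 0) + Ql (1, 1) (1, 1)) + s) / 2)
    (hxm : xm = ((Ql (0, 0) (0, 0) + Ql (1, 1) (1, 1)) - s) / 2)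
    (hLp : Lp = (Ql (0, 1) (0, 1) - Ql (0, 0) (0, 0) + xp)
        * (Ql (0, 0) (0, 0) + Ql (0, 1) (0, 1) - xm))
    (hLm : Lm = (Ql (0, 1) (0, 1) - Ql (0, 0) (0, 0) + xm)
        * (Ql (0, 0) (0, 0) + Ql (0, 1) (0, 1) - xp))
    (ha : Ql (0, 1) (0, 1) ≠ 0) (hx : xp ≠ xm) (N : ℕ) :
    Matrix.trace (Qg Ql (N + 1)) =
      (xp ^ N * Lp - xm ^ N * Lm) / (Ql (0, 1) (0, 1) * (xp - xm)) := by
  set a := Ql (0, 0) (0, 0)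
  set b := Ql (0, 1) (0, 1)
  set c := Ql (1, 0) (1, 0)
  set d := Ql (1, 1) (1, 1)
  have hsum : xp + xm = a + d := by rw [hxp, hxm]; ring
  have hprod : xp * xm = a * d - b * c := by
    rw [hxp, hxm]; linear_combination -hs / 4
  have htrace : (transferMatrix Ql).trace = xp + xm := by
    simp [transferMatrix, trace_fin_two, hsum, a, d]
  have hdet : (transferMatrix Ql).det = xp * xm := by
    simp [transferMatrix, det_fin_two, hprod, a, b, c, d]
  have binet := sub_mul_eq_of_two_step_recurrence (p := xp) (q := xm)
    (u := fun n => (Qg Ql (n + 1)).trace)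
    (fun n => by simp only [trace_Qg hvan, one_dotProduct_pow_mulVec_add_two, htrace, hdet]) N
  have htrace₀ : (Qg Ql 1).trace = 2 := by simp [Qg]
  have htrace₁ : (Qg Ql 2).trace = a + b + c + d := by
    simp [trace_Qg hvan 1, transferMatrix, mulVec, dotProduct, Fin.sum_univ_two, a, b, c, d]
    ring
  have hLp' : Lp = b * ((Qg Ql 2).trace - xm * (Qg Ql 1).trace) := by
    rw [hLp, htrace₀, htrace₁]; linear_combination (a + b) * hsum - hprod
  have hLm' : Lm = b * ((Qg Ql 2).trace - xp * (Qg Ql 1).trace) := by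
    rw [hLm, htrace₀, htrace₁]; linear_combination (a + b) * hsum - hprod
  rw [eq_div_iff (mul_ne_zero ha (sub_ne_zero.2 hx)), hLp', hLm']
  linear_combination b * binet
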